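/- Let A : V → V be an invertible linear map on a 2-dimensional real inner product space with |det A| = 1, and suppose the cone C = {αX + βY : αβ ≥ 0} (X, Y linearly independent) satisfies A(C \ {0}) ⊂ Int(C). Then there exists a unit vector ξ ∈ C with Aξ ∈ span(ξ) scaled by a factor of absolute value ≥ 1; i.e., A has a real eigenvector in C with eigenvalue of absolute value at least 1. -/

import Mathlib

/-!
In the basis `(X, Y)` write `A X = aX + cY`, `A Y = bX + dY`. Strict invariance of the cone forces
`ac > 0` and `bd > 0` (images of `X` and `Y`), and `ab > 0`: otherwise `-bX + aY` lies in the cone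
while its image `(ad - bc) Y` lies on its boundary. So all entries of the matrix of `A` have one
sign and the characteristic polynomial has a real root `λ` of largest modulus, with eigenvector
`bX + (λ - a)Y` in the cone; as the two roots multiply to `det A = ±1`, `|λ| ≥ 1`.
-/

/-- The cone determined by `X` and `Y`: `{αX + βY : αβ ≥ 0}`. -/
def cone {V : Type*} [AddCommGroup V] [Module ℝ V] (X Y : V) : Set V :=
  {v | ∃ α β : ℝ, 0 ≤ α * β ∧ v = α • X + β • Y}

open Filter Topology

section Cone

variable {V : Type*} [AddCommGroup V] [Module ℝ V] {X Y : V}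

lemma smul_mem_cone {v : V} (c : ℝ) (hv : v ∈ cone X Y) : c • v ∈ cone X Y := by
  obtain ⟨α, β, hαβ, rfl⟩ := hv
  refine ⟨c * α, c * β, ?_, by module⟩
  calc (0 : ℝ) ≤ (c * c) * (α * β) := mul_nonneg (mul_self_nonneg c) hαβ
    _ = c * α * (c * β) := by ring

lemma LinearIndependent.smul_add_smul_mem_cone_iff (hind : LinearIndependent ℝ ![X, Y])
    {α β : ℝ} : α • X + β • Y ∈ cone X Y ↔ 0 ≤ α * β := by
  refine ⟨fun ⟨α', β', hαβ', heq⟩ => ?_, fun hαβ => ⟨α, β, hαβ, rfl⟩⟩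
  obtain ⟨rfl, rfl⟩ := hind.eq_of_pair heq
  exact hαβ'

/-- Perturbing a point `αX + βY` of the interior by `±t (X - Y)` changes the product of its
coordinates by `±t(β - α) - t²`; both results must stay nonnegative, so `αβ ≥ t² > 0`. -/
lemma LinearIndependent.mul_pos_of_smul_add_smul_mem_interior_cone [TopologicalSpace V]
    [ContinuousAdd V] [ContinuousSMul ℝ V] (hind : LinearIndependent ℝ ![X, Y]) {α β : ℝ}
    (h : α • X + β • Y ∈ interior (cone X Y)) : 0 < α * β := by
  have hnear : ∀ u : V, ∀ᶠ t : ℝ in 𝓝 0, α • X + β • Y + t • u ∈ cone X Y := fun u => by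
    have hcont : Continuous fun t : ℝ => α • X + β • Y + t • u := by fun_prop
    exact (hcont.tendsto' 0 _ (by simp)).eventually_mem (mem_interior_iff_mem_nhds.1 h)
  obtain ⟨t, ht, hplus, hminus⟩ := ((hnear (X - Y)).and (hnear (Y - X))).exists_gt
  rw [show α • X + β • Y + t • (X - Y) = (α + t) • X + (β - t) • Y by module,
    hind.smul_add_smul_mem_cone_iff] at hplus
  rw [show α • X + β • Y + t • (Y - X) = (α - t) • X + (β + t) • Y by module,
    hind.smul_add_smul_mem_cone_iff] at hminus
  nlinarith

lemma LinearIndependent.mul_pos_of_mapsTo_interior_cone [TopologicalSpace V] [ContinuousAdd V]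
    [ContinuousSMul ℝ V] (hind : LinearIndependent ℝ ![X, Y]) {A : V →ₗ[ℝ] V}
    (hA : ∀ v ∈ cone X Y, v ≠ 0 → A v ∈ interior (cone X Y)) {a b c d : ℝ}
    (hX : A X = a • X + c • Y) (hY : A Y = b • X + d • Y) :
    0 < a * c ∧ 0 < b * d ∧ 0 < a * b := by
  have hmap : ∀ α β : ℝ, 0 ≤ α * β → α • X + β • Y ≠ 0 → A (α • X + β • Y) ∈ interior (cone X Y) :=
    fun α β hαβ hne => hA _ ⟨α, β, hαβ, rfl⟩ hne
  have hac : 0 < a * c := by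
    have := hmap 1 0 (by norm_num) (by simpa using hind.ne_zero 0)
    rw [one_smul, zero_smul, add_zero, hX] at this
    exact hind.mul_pos_of_smul_add_smul_mem_interior_cone this
  have hbd : 0 < b * d := by
    have := hmap 0 1 (by norm_num) (by simpa using hind.ne_zero 1)
    rw [one_smul, zero_smul, zero_add, hY] at this
    exact hind.mul_pos_of_smul_add_smul_mem_interior_cone this
  refine ⟨hac, hbd, ?_⟩
  by_contra! hab
  have hne : (-b) • X + a • Y ≠ 0 := fun h0 =>
    left_ne_zero_of_mul hac.ne' (LinearIndependent.pair_iff.1 hind _ _ h0).2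
  have himage := hmap (-b) a (by nlinarith) hne
  rw [show A ((-b) • X + a • Y) = (0 : ℝ) • X + (a * d - b * c) • Y by
    rw [map_add, map_smul, map_smul, hX, hY]; module] at himage
  simpa using hind.mul_pos_of_smul_add_smul_mem_interior_cone himage

end Cone

lemma Module.Basis.exists_eq_smul_add_smul {R M : Type*} [Semiring R] [AddCommMonoid M]
    [Module R M] (B : Module.Basis (Fin 2) R M) (v : M) : ∃ a c : R, v = a • B 0 + c • B 1 :=
  ⟨B.repr v 0, B.repr v 1, by
    rw [← Fin.sum_univ_two (fun i => B.repr v i • B i), B.sum_repr]⟩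

lemma LinearMap.det_eq_of_apply_basis_fin_two {R M : Type*} [CommRing R] [AddCommGroup M]
    [Module R M] (B : Module.Basis (Fin 2) R M) {A : M →ₗ[R] M} {a b c d : R}
    (hX : A (B 0) = a • B 0 + c • B 1) (hY : A (B 1) = b • B 0 + d • B 1) :
    LinearMap.det A = a * d - b * c := by
  rw [← LinearMap.det_toMatrix B, Matrix.det_fin_two]
  simp [LinearMap.toMatrix_apply, hX, hY]

lemma LinearMap.apply_eigenvector_of_charpoly_root {R M : Type*} [CommRing R] [AddCommGroup M] [Module R M]
    {A : M →ₗ[R] M} {X Y : M} {a b c d l : R} (hX : A X = a • X + c • Y)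
    (hY : A Y = b • X + d • Y) (hl : l ^ 2 = (a + d) * l - (a * d - b * c)) :
    A (b • X + (l - a) • Y) = l • (b • X + (l - a) • Y) := by
  rw [map_add, map_smul, map_smul, hX, hY]
  linear_combination (norm := module) -(hl • Y)

/-- The larger root `(a + d + √((a - d)² + 4bc)) / 2` of the characteristic polynomial of
`!![a, b; c, d]` dominates the other one in modulus. -/
lemma exists_dominant_charpoly_root {a b c d : ℝ} (hbc : 0 ≤ b * c) (had : 0 ≤ a + d) :
    ∃ l, a ≤ l ∧ |a * d - b * c| ≤ l ^ 2 ∧ l ^ 2 = (a + d) * l - (a * d - b * c) := by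
  set r := √((a - d) ^ 2 + 4 * (b * c))
  have hr : r ^ 2 = (a - d) ^ 2 + 4 * (b * c) := Real.sq_sqrt (by positivity)
  have hr_ge : |a - d| ≤ r := Real.abs_le_sqrt (by linarith)
  have hr_nonneg : 0 ≤ r := Real.sqrt_nonneg _
  have hprod : (a + d + r) / 2 * ((a + d - r) / 2) = a * d - b * c := by
    linear_combination -hr / 4
  refine ⟨(a + d + r) / 2, by linarith [le_abs_self (a - d)], ?_, by linear_combination hr / 4⟩
  rw [← hprod, abs_mul, sq, abs_of_nonneg (by linarith)]
  gcongr
  exact abs_le.2 ⟨by linarith, by linarith⟩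

lemma exists_charpoly_root_of_mul_pos {a b c d : ℝ} (hac : 0 < a * c) (hbd : 0 < b * d)
    (hab : 0 < a * b) :
    ∃ l, |a * d - b * c| ≤ l ^ 2 ∧ l ^ 2 = (a + d) * l - (a * d - b * c) ∧ 0 ≤ b * (l - a) := by
  rcases lt_or_gt_of_ne (left_ne_zero_of_mul hac.ne') with ha | ha
  · have hb : b < 0 := neg_of_mul_pos_right hab ha.le
    have hc : c < 0 := neg_of_mul_pos_right hac ha.le
    have hd : d < 0 := neg_of_mul_pos_right hbd hb.le
    obtain ⟨l, hal, hdom, hl⟩ :=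
      exists_dominant_charpoly_root (a := -a) (b := -b) (c := -c) (d := -d) (by nlinarith)
        (by linarith)
    refine ⟨-l, by simpa [neg_mul_neg] using hdom, by linear_combination hl, by nlinarith⟩
  · have hb : 0 < b := pos_of_mul_pos_right hab ha.le
    have hc : 0 < c := pos_of_mul_pos_right hac ha.le
    have hd : 0 < d := pos_of_mul_pos_right hbd hb.le
    obtain ⟨l, hal, hdom, hl⟩ :=
      exists_dominant_charpoly_root (a := a) (d := d) (mul_pos hb hc).le (by linarith)
    exact ⟨l, hdom, hl, mul_nonneg hb.le (by linarith)⟩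

theorem strict_cone_invariance_expanding_eigenvector_general {V : Type*} [NormedAddCommGroup V]
    [InnerProductSpace ℝ V] (hdim : Module.finrank ℝ V = 2)
    (X Y : V) (hind : LinearIndependent ℝ ![X, Y])
    (A : V →ₗ[ℝ] V) (hdet : |LinearMap.det A| = 1)
    (hcone : ∀ v ∈ cone X Y, v ≠ 0 → A v ∈ interior (cone X Y)) :
    ∃ ξ ∈ cone X Y, ‖ξ‖ = 1 ∧ ∃ μ : ℝ, 1 ≤ |μ| ∧ A ξ = μ • ξ := by
  obtain ⟨B, rfl, rfl⟩ : ∃ B : Module.Basis (Fin 2) ℝ V, B 0 = X ∧ B 1 = Y :=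
    ⟨basisOfLinearIndependentOfCardEqFinrank hind (by simp [hdim]), by simp, by simp⟩
  obtain ⟨a, c, hX⟩ := B.exists_eq_smul_add_smul (A (B 0))
  obtain ⟨b, d, hY⟩ := B.exists_eq_smul_add_smul (A (B 1))
  obtain ⟨hac, hbd, hab⟩ := hind.mul_pos_of_mapsTo_interior_cone hcone hX hY
  obtain ⟨l, hdom, hl, hcone_l⟩ := exists_charpoly_root_of_mul_pos hac hbd hab
  rw [LinearMap.det_eq_of_apply_basis_fin_two B hX hY] at hdet
  set v := b • B 0 + (l - a) • B 1
  have hv : v ≠ 0 := fun h0 =>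
    right_ne_zero_of_mul hab.ne' (LinearIndependent.pair_iff.1 hind _ _ h0).1
  refine ⟨‖v‖⁻¹ • v, smul_mem_cone _ ⟨b, l - a, hcone_l, rfl⟩, norm_smul_inv_norm hv, l,
    (one_le_sq_iff_one_le_abs l).1 (hdet ▸ hdom), ?_⟩
  rw [map_smul, LinearMap.apply_eigenvector_of_charpoly_root hX hY hl, smul_comm]

/-- If `A` is an invertible linear map of a 2-dimensional real inner product space with
`|det A| = 1` mapping the cone `C = {αX + βY : αβ ≥ 0}` (minus the origin) strictly into
its interior, then `A` has an eigenvector in `C` (a unit vector) whose eigenvalue has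
absolute value at least `1`. -/
theorem strict_cone_invariance_expanding_eigenvector {V : Type*} [NormedAddCommGroup V]
    [InnerProductSpace ℝ V] [FiniteDimensional ℝ V] (hdim : Module.finrank ℝ V = 2)
    (X Y : V) (hind : LinearIndependent ℝ ![X, Y])
    (A : V →ₗ[ℝ] V) (hinv : Function.Bijective A) (hdet : |LinearMap.det A| = 1)
    (hcone : ∀ v ∈ cone X Y, v ≠ 0 → A v ∈ interior (cone X Y)) :
    ∃ ξ ∈ cone X Y, ‖ξ‖ = 1 ∧ ∃ μ : ℝ, 1 ≤ |μ| ∧ A ξ = μ • ξ :=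
  strict_cone_invariance_expanding_eigenvector_general hdim X Y hind A hdet hcone
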